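/- arXiv:2410.18414 — 2 statements merged into one kernel-verified Lean document; each statement's English description precedes it below -/
import Mathlib

section
/- Semi-discrete Gauss's law for BDF methods: suppose (1/(c²Δt²)) Σ_{i=n-k}^{n} a_{n-i} Σ_{j=i-k}^{i} a_{i-j} φ^j - Δφ^n = ρ^n/ε₀ (the wave equation for φ), and the gauge condition (1/(c²Δt)) Σ_{i=n-k}^{n} a_{n-i} φ^i + div A^n = 0 holds for all time levels n. Define E^n = -∇φ^n - (1/Δt) Σ_{i=n-k}^{n} a_{n-i} A^i. Then div E^n = ρ^n/ε₀. -/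
open Finset

/-!
Applying `div` to the definition of `E^n` turns the BDF difference of `A` into a BDF difference of
`div A`, which the gauge condition at every level replaces by the BDF difference of the BDF
difference of `φ`. The constants combine to `1 / (c²Δt²)`, and what remains is exactly the
left-hand side of the discrete wave equation for `φ`.
-/

section BDF

variable {R M N : Type*}

/-- `Δt` times the BDF-`k` approximation of the time derivative of `u` at level `n`. -/
noncomputable def bdfDiff [Semiring R] [AddCommMonoid M] [Module R M] (a : ℤ → R) (k : ℤ) (u : ℤ → M)
    (n : ℤ) : M :=
  ∑ i ∈ Icc (n - k) n, a (n - i) • u i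

variable [CommSemiring R] [AddCommMonoid M] [Module R M] [AddCommMonoid N] [Module R N]
  (a : ℤ → R) (k : ℤ)

theorem LinearMap.map_bdfDiff (f : M →ₗ[R] N) (u : ℤ → M) (n : ℤ) :
    f (bdfDiff a k u n) = bdfDiff a k (fun m => f (u m)) n := by
  simp only [bdfDiff, map_sum, map_smul]

theorem bdfDiff_smul (r : R) (u : ℤ → M) (n : ℤ) :
    bdfDiff a k (fun m => r • u m) n = r • bdfDiff a k u n := by
  simp only [bdfDiff, smul_sum, smul_comm r]

end BDF

theorem map_bdfDiff_of_gauge {R S V : Type*} [CommRing R] [AddCommGroup S] [Module R S]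
    [AddCommGroup V] [Module R V] (dvg : V →ₗ[R] S) (a : ℤ → R) (k : ℤ) (s : R)
    {φ : ℤ → S} {A : ℤ → V} (hgauge : ∀ m, s • bdfDiff a k φ m + dvg (A m) = 0) (n : ℤ) :
    dvg (bdfDiff a k A n) = -(s • bdfDiff a k (bdfDiff a k φ) n) := by
  have hdvgA : (fun m => dvg (A m)) = fun m => (-s) • bdfDiff a k φ m := by
    funext m
    rw [neg_smul, eq_neg_of_add_eq_zero_right (hgauge m)]
  rw [dvg.map_bdfDiff, hdvgA, bdfDiff_smul, neg_smul]

theorem bdf_gauss_law_general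
    {S V : Type*} [AddCommGroup S] [Module ℝ S] [AddCommGroup V] [Module ℝ V]
    (grad : S →ₗ[ℝ] V) (dvg : V →ₗ[ℝ] S) (lap : S →ₗ[ℝ] S)
    (hdivgrad : ∀ ψ : S, dvg (grad ψ) = lap ψ)
    (c Δt ε₀ : ℝ)
    (k : ℤ) (a : ℤ → ℝ)
    (φ ρ : ℤ → S) (A : ℤ → V) (E : V) (n : ℤ)
    (hwave : (1 / (c ^ 2 * Δt ^ 2)) •
        (∑ i ∈ Finset.Icc (n - k) n, a (n - i) •
          ∑ j ∈ Finset.Icc (i - k) i, a (i - j) • φ j)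
        - lap (φ n) = (1 / ε₀) • ρ n)
    (hgauge : ∀ m : ℤ,
      (1 / (c ^ 2 * Δt)) • (∑ i ∈ Finset.Icc (m - k) m, a (m - i) • φ i)
        + dvg (A m) = 0)
    (hE : E = -grad (φ n)
        - (1 / Δt) • ∑ i ∈ Finset.Icc (n - k) n, a (n - i) • A i) :
    dvg E = (1 / ε₀) • ρ n := by
  have hwave' : (1 / (c ^ 2 * Δt ^ 2)) • bdfDiff a k (bdfDiff a k φ) n - lap (φ n)
      = (1 / ε₀) • ρ n := hwave
  have hE' : E = -grad (φ n) - (1 / Δt) • bdfDiff a k A n := hE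
  have hscale : 1 / Δt * (1 / (c ^ 2 * Δt)) = 1 / (c ^ 2 * Δt ^ 2) := by
    rw [one_div_mul_one_div]
    ring_nf
  rw [hE', map_sub, map_neg, map_smul, hdivgrad, map_bdfDiff_of_gauge dvg a k _ hgauge,
    smul_neg, smul_smul, hscale, ← hwave']
  abel

/-- Semi-discrete Gauss's law for BDF-k methods: if the BDF wave equation for `φ`
holds at level `n` and the semi-discrete gauge condition holds at every level,
then the semi-discrete electric field satisfies `div E^n = ρ^n / ε₀`. -/
theorem bdf_gauss_law
    {S V : Type*} [AddCommGroup S] [Module ℝ S] [AddCommGroup V] [Module ℝ V]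
    (grad : S →ₗ[ℝ] V) (dvg : V →ₗ[ℝ] S) (lap : S →ₗ[ℝ] S)
    (hdivgrad : ∀ ψ : S, dvg (grad ψ) = lap ψ)
    (c Δt ε₀ : ℝ) (hc : 0 < c) (hΔt : 0 < Δt) (hε₀ : 0 < ε₀)
    (k : ℤ) (hk : 1 ≤ k) (a : ℤ → ℝ)
    (φ ρ : ℤ → S) (A : ℤ → V) (E : V) (n : ℤ)
    (hwave : (1 / (c ^ 2 * Δt ^ 2)) •
        (∑ i ∈ Finset.Icc (n - k) n, a (n - i) •
          ∑ j ∈ Finset.Icc (i - k) i, a (i - j) • φ j)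
        - lap (φ n) = (1 / ε₀) • ρ n)
    (hgauge : ∀ m : ℤ,
      (1 / (c ^ 2 * Δt)) • (∑ i ∈ Finset.Icc (m - k) m, a (m - i) • φ i)
        + dvg (A m) = 0)
    (hE : E = -grad (φ n)
        - (1 / Δt) • ∑ i ∈ Finset.Icc (n - k) n, a (n - i) • A i) :
    dvg E = (1 / ε₀) • ρ n :=
  bdf_gauss_law_general grad dvg lap hdivgrad c Δt ε₀ k a φ ρ A E n hwave hgauge hE
end

section
/- Semi-discrete Gauss's law for the fully implicit CDF-2 scheme: assume the wave equation (φ^{n+3/2} - 2φ^{n+1/2} + φ^{n-1/2})/(c²Δt²) - Δ((φ^{n+3/2}+φ^{n-1/2})/2) = (ρ^{n+3/2}+ρ^{n-1/2})/(2ε₀) and the gauge condition (φ^{k+1/2} - φ^{k-1/2})/(c²Δt) + div A^k = 0 for k = n and k = n+1. Define E^{n+1/2} = -∇((φ^{n+3/2}+φ^{n-1/2})/2) - (A^{n+1}-A^n)/Δt. Then div E^{n+1/2} = (ρ^{n+3/2} + ρ^{n-1/2})/(2ε₀). -/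
theorem LinearMap.map_sub_eq_neg_smul_secondDiff {R M N : Type*} [CommRing R] [AddCommGroup M]
    [Module R M] [AddCommGroup N] [Module R N] (f : N →ₗ[R] M) (a : R) (x y z : M) (u v : N)
    (hu : a • (x - y) + f u = 0) (hv : a • (y - z) + f v = 0) :
    f (u - v) = -a • (x - (2 : R) • y + z) := by
  rw [map_sub, eq_neg_of_add_eq_zero_right hu, eq_neg_of_add_eq_zero_right hv]
  module

/-- `p3`, `p1`, `pm1` denote `φ^{n+3/2}`, `φ^{n+1/2}`, `φ^{n-1/2}`; `r3`, `rm1` denote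
`ρ^{n+3/2}`, `ρ^{n-1/2}`; `An1`, `An` denote `A^{n+1}`, `A^n`. -/
theorem cdf2_implicit_gauss_law_general
    {S V : Type*} [AddCommGroup S] [Module ℝ S] [AddCommGroup V] [Module ℝ V]
    (grad : S →ₗ[ℝ] V) (dvg : V →ₗ[ℝ] S) (lap : S →ₗ[ℝ] S)
    (hdivgrad : ∀ ψ : S, dvg (grad ψ) = lap ψ)
    (c Δt ε₀ : ℝ)
    (p3 p1 pm1 r3 rm1 : S) (An1 An : V) (E : V)
    (hwave : (1 / (c ^ 2 * Δt ^ 2)) • (p3 - (2 : ℝ) • p1 + pm1)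
        - lap (((1 : ℝ) / 2) • (p3 + pm1)) = (1 / (2 * ε₀)) • (r3 + rm1))
    (hgauge_n1 : (1 / (c ^ 2 * Δt)) • (p3 - p1) + dvg An1 = 0)
    (hgauge_n : (1 / (c ^ 2 * Δt)) • (p1 - pm1) + dvg An = 0)
    (hE : E = -grad (((1 : ℝ) / 2) • (p3 + pm1)) - (1 / Δt) • (An1 - An)) :
    dvg E = (1 / (2 * ε₀)) • (r3 + rm1) := by
  have hdivA := dvg.map_sub_eq_neg_smul_secondDiff _ p3 p1 pm1 An1 An hgauge_n1 hgauge_n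
  have hscale : 1 / Δt * (1 / (c ^ 2 * Δt)) = 1 / (c ^ 2 * Δt ^ 2) := by ring
  rw [← hwave, hE, map_sub, map_neg, hdivgrad, map_smul dvg, hdivA, ← hscale]
  module

/-- Semi-discrete Gauss's law for the fully implicit CDF-2 scheme. Here `p3`, `p1`,
`pm1` denote `φ^{n+3/2}`, `φ^{n+1/2}`, `φ^{n-1/2}`; `r3`, `rm1` denote
`ρ^{n+3/2}`, `ρ^{n-1/2}`; `An1`, `An` denote `A^{n+1}`, `A^n`. -/
theorem cdf2_implicit_gauss_law
    {S V : Type*} [AddCommGroup S] [Module ℝ S] [AddCommGroup V] [Module ℝ V]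
    (grad : S →ₗ[ℝ] V) (dvg : V →ₗ[ℝ] S) (lap : S →ₗ[ℝ] S)
    (hdivgrad : ∀ ψ : S, dvg (grad ψ) = lap ψ)
    (c Δt ε₀ : ℝ) (hc : 0 < c) (hΔt : 0 < Δt) (hε₀ : 0 < ε₀)
    (p3 p1 pm1 r3 rm1 : S) (An1 An : V) (E : V)
    (hwave : (1 / (c ^ 2 * Δt ^ 2)) • (p3 - (2 : ℝ) • p1 + pm1)
        - lap (((1 : ℝ) / 2) • (p3 + pm1)) = (1 / (2 * ε₀)) • (r3 + rm1))
    (hgauge_n1 : (1 / (c ^ 2 * Δt)) • (p3 - p1) + dvg An1 = 0)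
    (hgauge_n : (1 / (c ^ 2 * Δt)) • (p1 - pm1) + dvg An = 0)
    (hE : E = -grad (((1 : ℝ) / 2) • (p3 + pm1)) - (1 / Δt) • (An1 - An)) :
    dvg E = (1 / (2 * ε₀)) • (r3 + rm1) :=
  cdf2_implicit_gauss_law_general grad dvg lap hdivgrad c Δt ε₀ p3 p1 pm1 r3 rm1 An1 An E hwave
    hgauge_n1 hgauge_n hE
end
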